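/- arXiv:2306.13829 — 8 statements merged into one kernel-verified Lean document; each statement's English description precedes it below -/
import Mathlib

section
/- Let n, m, k be natural numbers, and let H, Λ, Γ̄ be real n×n matrices with H and Γ̄ invertible, U a real n×k matrix, Ū a real n×m matrix, and Γ an invertible real m×m matrix. Assume Ū·Ūᵀ = I_n − U·Uᵀ and Γ̄·Ū = Ū·Γ. Then det(H + Λ·Γ̄⁻¹·(I_n − U·Uᵀ)) · det(Γ) = det(H) · det(Γ + Ūᵀ·H⁻¹·Λ·Ū). -/
open Matrix

/-- the determinant identity behind the Jacobian computation
(Lemma A.2): `det(H + Λ Γ̄⁻¹ (I − U Uᵀ)) · det Γ = det H · det(Γ + Ūᵀ H⁻¹ Λ Ū)`. -/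
theorem jacobian_determinant_identity
    (n m k : ℕ)
    (H Lam Γbar : Matrix (Fin n) (Fin n) ℝ)
    (hH : IsUnit H.det) (hΓbar : IsUnit Γbar.det)
    (U : Matrix (Fin n) (Fin k) ℝ) (Ubar : Matrix (Fin n) (Fin m) ℝ)
    (Γ : Matrix (Fin m) (Fin m) ℝ) (hΓ : IsUnit Γ.det)
    (h1 : Ubar * Ubarᵀ = 1 - U * Uᵀ)
    (h2 : Γbar * Ubar = Ubar * Γ) :
    (H + Lam * Γbar⁻¹ * (1 - U * Uᵀ)).det * Γ.det
      = H.det * (Γ + Ubarᵀ * H⁻¹ * Lam * Ubar).det := by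
  have hcomm : Γbar⁻¹ * Ubar = Ubar * Γ⁻¹ := by
    have h3 := congrArg (fun M => Γbar⁻¹ * M * Γ⁻¹) h2
    simp only [← Matrix.mul_assoc] at h3
    rw [Matrix.nonsing_inv_mul _ hΓbar, Matrix.one_mul] at h3
    rw [Matrix.mul_assoc (Γbar⁻¹ * Ubar), Matrix.mul_nonsing_inv _ hΓ, Matrix.mul_one] at h3
    exact h3.symm
  have key : H + Lam * Γbar⁻¹ * (1 - U * Uᵀ)
      = H * (1 + H⁻¹ * (Lam * (Ubar * Γ⁻¹)) * Ubarᵀ) := by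
    rw [← h1, Matrix.mul_add, Matrix.mul_one, ← Matrix.mul_assoc H,
      Matrix.mul_nonsing_inv_cancel_left _ _ hH]
    rw [Matrix.mul_assoc Lam Γbar⁻¹ (Ubar * Ubarᵀ), ← Matrix.mul_assoc Γbar⁻¹,
      hcomm, Matrix.mul_assoc]
    simp only [Matrix.mul_assoc]
  rw [key, Matrix.det_mul, mul_assoc]
  congr 1
  rw [Matrix.det_one_add_mul_comm]
  have : (1 + Ubarᵀ * (H⁻¹ * (Lam * (Ubar * Γ⁻¹)))) * Γ
      = Γ + Ubarᵀ * H⁻¹ * Lam * Ubar := by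
    rw [Matrix.add_mul, Matrix.one_mul]
    simp [Matrix.mul_assoc, Matrix.nonsing_inv_mul _ hΓ]
  calc (1 + Ubarᵀ * (H⁻¹ * (Lam * (Ubar * Γ⁻¹)))).det * Γ.det
      = ((1 + Ubarᵀ * (H⁻¹ * (Lam * (Ubar * Γ⁻¹)))) * Γ).det := (Matrix.det_mul _ _).symm
    _ = _ := by rw [this]
end

section
/- Let n, m, k be natural numbers with m + k = n. Let U be a real n×k matrix, Ū a real n×m matrix, Γ̄ a real n×n matrix and Γ a real m×m matrix such that Ūᵀ·Ū = I_m, Uᵀ·U = I_k, Ūᵀ·U = 0, and Γ̄·Ū = Ū·Γ. Let W be the n×n matrix obtained by concatenating the columns of Γ̄·Ū (first m columns) with the columns of U (last k columns). Then |det(W)| = |det(Γ)|. -/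
/-!
Since `Γ̄ Ū = Ū Γ`, the matrix `[Γ̄Ū U]` factors as `[Ū U] · blockdiag(Γ, I)`. The first factor has
orthonormal columns, so its determinant is `±1`, and the second has determinant `det Γ`.
-/

open Matrix

theorem Matrix.abs_det_eq_one_of_transpose_mul_self {n : Type*} [Fintype n] [DecidableEq n]
    {Q : Matrix n n ℝ} (hQ : Qᵀ * Q = 1) : |Q.det| = 1 := by
  have h : |Q.det| * |Q.det| = 1 := by
    have hdet := congrArg det hQ
    rw [det_mul, det_transpose, det_one] at hdet
    rw [← abs_mul, hdet, abs_one]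
  exact (mul_self_eq_one_iff.mp h).resolve_right (by linarith [abs_nonneg Q.det])

theorem Matrix.fromCols_transpose_mul_self_eq_one {n m k : Type*} [Fintype n]
    [DecidableEq m] [DecidableEq k] {A : Matrix n m ℝ} {B : Matrix n k ℝ}
    (hA : Aᵀ * A = 1) (hB : Bᵀ * B = 1) (hAB : Aᵀ * B = 0) :
    (fromCols A B)ᵀ * fromCols A B = 1 := by
  have hBA : Bᵀ * A = 0 := by simpa using congrArg transpose hAB
  rw [transpose_fromCols, fromRows_mul_fromCols, hA, hB, hAB, hBA, fromBlocks_one]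

theorem Matrix.abs_det_submatrix_mul_of_transpose_mul_self {n p : Type*}
    [Fintype n] [DecidableEq n] [Fintype p] [DecidableEq p]
    {A : Matrix n p ℝ} (hA : Aᵀ * A = 1) (M : Matrix p p ℝ) (e : n ≃ p) :
    |((A * M).submatrix id e).det| = |M.det| := by
  have hQ : (A.submatrix id e)ᵀ * A.submatrix id e = 1 := by
    rw [transpose_submatrix, ← submatrix_mul Aᵀ A e id e Function.bijective_id, hA,
      submatrix_one_equiv]
  rw [← submatrix_mul_equiv A M id e e, det_mul, abs_mul,
    abs_det_eq_one_of_transpose_mul_self hQ, det_submatrix_equiv_self, one_mul]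

theorem Matrix.fromCols_mul_eq_mul_fromBlocks {R n m k : Type*} [CommRing R]
    [Fintype m] [Fintype k] [DecidableEq k]
    (A : Matrix n m R) (B : Matrix n k R) (C : Matrix m m R) :
    fromCols (A * C) B = fromCols A B * fromBlocks C 0 0 (1 : Matrix k k R) := by
  simp [fromCols_mul_fromBlocks]

/-- `|det [Γ̄Ū  U]| = |det Γ|` when the columns of `[Ū U]` are
orthonormal and `Γ̄ Ū = Ū Γ` (the claim `det D_ψ = ± det Γ` in Lemma A.2). -/
theorem det_fromColumns_eq_det_gamma
    (n m k : ℕ) (hmk : m + k = n)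
    (U : Matrix (Fin n) (Fin k) ℝ) (Ubar : Matrix (Fin n) (Fin m) ℝ)
    (Γbar : Matrix (Fin n) (Fin n) ℝ) (Γ : Matrix (Fin m) (Fin m) ℝ)
    (h1 : Ubarᵀ * Ubar = 1) (h2 : Uᵀ * U = 1) (h3 : Ubarᵀ * U = 0)
    (h4 : Γbar * Ubar = Ubar * Γ)
    (W : Matrix (Fin n) (Fin n) ℝ)
    (hW : W = (Matrix.fromCols (Γbar * Ubar) U).submatrix id
      ⇑(finSumFinEquiv.trans (finCongr hmk)).symm) :
    |W.det| = |Γ.det| := by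
  rw [hW, h4, fromCols_mul_eq_mul_fromBlocks,
    abs_det_submatrix_mul_of_transpose_mul_self (fromCols_transpose_mul_self_eq_one h1 h2 h3),
    det_fromBlocks_zero₂₁, det_one, mul_one]
end

section
/- Let m, k, p ∈ ℕ. Let Σ be a real m×m symmetric positive definite matrix, Ω a real p×p symmetric positive definite matrix, A a real p×m matrix, V a real p×k matrix such that VᵀΩ⁻¹V is invertible, and let c ∈ ℝ^p, b* ∈ ℝ^m. Define Ω̄ = (VᵀΩ⁻¹V)⁻¹, Ā = −Ω̄VᵀΩ⁻¹A, b̄ = −Ω̄VᵀΩ⁻¹c, and assume T := Σ⁻¹ − ĀᵀΩ̄⁻¹Ā + AᵀΩ⁻¹A is invertible; set Θ̄ = T⁻¹, R̄ = Θ̄Σ⁻¹, and s̄ = Θ̄(ĀᵀΩ̄⁻¹b̄ − AᵀΩ⁻¹c). Then there exists a constant κ ∈ ℝ (depending only on b*, c, and the matrices, but not on β or γ) such that for all β ∈ ℝ^m and γ ∈ ℝ^k: (1/2)(β − b*)ᵀΣ⁻¹(β − b*) + (1/2)(Aβ + Vγ + c)ᵀΩ⁻¹(Aβ + Vγ + c)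 = (1/2)(β − R̄b* − s̄)ᵀΘ̄⁻¹(β − R̄b* − s̄) + (1/2)(γ − Āβ − b̄)ᵀΩ̄⁻¹(γ − Āβ − b̄) + κ. -/
open Matrix

lemma dot_trans {a b : ℕ} (N : Matrix (Fin a) (Fin b) ℝ) (x : Fin a → ℝ) (y : Fin b → ℝ) :
    x ⬝ᵥ N.mulVec y = y ⬝ᵥ Nᵀ.mulVec x := by
  rw [Matrix.dotProduct_mulVec, ← Matrix.mulVec_transpose, dotProduct_comm]

lemma dot_shiftL {a b : ℕ} (M : Matrix (Fin a) (Fin b) ℝ) (x : Fin b → ℝ) (y : Fin a → ℝ) :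
    (M.mulVec x) ⬝ᵥ y = x ⬝ᵥ Mᵀ.mulVec y := by
  rw [dotProduct_comm, Matrix.dotProduct_mulVec, ← Matrix.mulVec_transpose,
    dotProduct_comm]

lemma dot_symm' {n : ℕ} (M : Matrix (Fin n) (Fin n) ℝ) (hM : Mᵀ = M) (x y : Fin n → ℝ) :
    x ⬝ᵥ M.mulVec y = y ⬝ᵥ M.mulVec x := by
  rw [dot_trans, hM]

/-- the completion-of-squares identity behind Proposition 3.4:
the sum of the two quadratic forms in `(β, γ)` factors, up to a constant `κ`
free of `β` and `γ`, as the sum of two new quadratic forms. -/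
theorem completion_of_squares_identity
    (m k p : ℕ)
    (S : Matrix (Fin m) (Fin m) ℝ) (hS : S.PosDef)
    (Ω : Matrix (Fin p) (Fin p) ℝ) (hΩ : Ω.PosDef)
    (A : Matrix (Fin p) (Fin m) ℝ) (V : Matrix (Fin p) (Fin k) ℝ)
    (hV : IsUnit (Vᵀ * Ω⁻¹ * V).det)
    (c : Fin p → ℝ) (bstar : Fin m → ℝ)
    (Ωbar : Matrix (Fin k) (Fin k) ℝ) (hΩbar : Ωbar = (Vᵀ * Ω⁻¹ * V)⁻¹)
    (Abar : Matrix (Fin k) (Fin m) ℝ) (hAbar : Abar = -(Ωbar * Vᵀ * Ω⁻¹ * A))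
    (bbar : Fin k → ℝ) (hbbar : bbar = -((Ωbar * Vᵀ * Ω⁻¹).mulVec c))
    (T : Matrix (Fin m) (Fin m) ℝ)
    (hT : T = S⁻¹ - Abarᵀ * Ωbar⁻¹ * Abar + Aᵀ * Ω⁻¹ * A)
    (hTunit : IsUnit T.det)
    (Θbar : Matrix (Fin m) (Fin m) ℝ) (hΘbar : Θbar = T⁻¹)
    (Rbar : Matrix (Fin m) (Fin m) ℝ) (hRbar : Rbar = Θbar * S⁻¹)
    (sbar : Fin m → ℝ)
    (hsbar : sbar = Θbar.mulVec ((Abarᵀ * Ωbar⁻¹).mulVec bbar - (Aᵀ * Ω⁻¹).mulVec c)) :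
    ∃ κ : ℝ, ∀ (β : Fin m → ℝ) (γ : Fin k → ℝ),
      (1 / 2) * ((β - bstar) ⬝ᵥ S⁻¹.mulVec (β - bstar))
        + (1 / 2) * ((A.mulVec β + V.mulVec γ + c) ⬝ᵥ
            Ω⁻¹.mulVec (A.mulVec β + V.mulVec γ + c))
      = (1 / 2) * ((β - Rbar.mulVec bstar - sbar) ⬝ᵥ
            Θbar⁻¹.mulVec (β - Rbar.mulVec bstar - sbar))
        + (1 / 2) * ((γ - Abar.mulVec β - bbar) ⬝ᵥ
            Ωbar⁻¹.mulVec (γ - Abar.mulVec β - bbar))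
        + κ := by
  -- basic symmetry facts
  have hSs : Sᵀ = S := by
    rw [← Matrix.conjTranspose_eq_transpose_of_trivial]; exact hS.1.eq
  have hΩs : Ωᵀ = Ω := by
    rw [← Matrix.conjTranspose_eq_transpose_of_trivial]; exact hΩ.1.eq
  have hPs : (S⁻¹)ᵀ = S⁻¹ := by rw [Matrix.transpose_nonsing_inv, hSs]
  have hQs : (Ω⁻¹)ᵀ = Ω⁻¹ := by rw [Matrix.transpose_nonsing_inv, hΩs]
  have hWeq : Ωbar⁻¹ = Vᵀ * Ω⁻¹ * V := by
    rw [hΩbar, Matrix.nonsing_inv_nonsing_inv _ hV]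
  have hWs : (Ωbar⁻¹)ᵀ = Ωbar⁻¹ := by
    rw [hWeq]
    simp [Matrix.transpose_mul, hQs, Matrix.mul_assoc]
  have hWΩbar : Ωbar⁻¹ * Ωbar = 1 := by
    rw [hWeq, hΩbar]; exact Matrix.mul_nonsing_inv _ hV
  have hWA : Ωbar⁻¹ * Abar = -(Vᵀ * Ω⁻¹ * A) := by
    rw [hAbar, Matrix.mul_neg]
    congr 1
    calc Ωbar⁻¹ * (Ωbar * Vᵀ * Ω⁻¹ * A)
        = Ωbar⁻¹ * Ωbar * Vᵀ * Ω⁻¹ * A := by simp only [Matrix.mul_assoc]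
      _ = Vᵀ * Ω⁻¹ * A := by rw [hWΩbar, Matrix.one_mul]
  have hWb : Ωbar⁻¹.mulVec bbar = -((Vᵀ * Ω⁻¹).mulVec c) := by
    have h : Ωbar⁻¹ * (Ωbar * Vᵀ * Ω⁻¹) = Vᵀ * Ω⁻¹ := by
      calc Ωbar⁻¹ * (Ωbar * Vᵀ * Ω⁻¹)
          = Ωbar⁻¹ * Ωbar * Vᵀ * Ω⁻¹ := by simp only [Matrix.mul_assoc]
        _ = Vᵀ * Ω⁻¹ := by rw [hWΩbar, Matrix.one_mul]
    rw [hbbar, Matrix.mulVec_neg, Matrix.mulVec_mulVec, h]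
  have hΘinv : Θbar⁻¹ = T := by rw [hΘbar, Matrix.nonsing_inv_nonsing_inv _ hTunit]
  have hTΘ : T * Θbar = 1 := by rw [hΘbar]; exact Matrix.mul_nonsing_inv _ hTunit
  have hTs : Tᵀ = T := by
    rw [hT]
    simp [Matrix.transpose_add, Matrix.transpose_sub, Matrix.transpose_mul,
      Matrix.transpose_transpose, hPs, hQs, hWs, Matrix.mul_assoc]
  -- the constant
  refine ⟨(1/2) * (bstar ⬝ᵥ S⁻¹.mulVec bstar) + (1/2) * (c ⬝ᵥ Ω⁻¹.mulVec c)
      - (1/2) * ((Rbar.mulVec bstar + sbar) ⬝ᵥ T.mulVec (Rbar.mulVec bstar + sbar))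
      - (1/2) * (bbar ⬝ᵥ Ωbar⁻¹.mulVec bbar), fun β γ => ?_⟩
  rw [hΘinv, sub_sub]
  simp only [Matrix.mulVec_sub, Matrix.mulVec_add, sub_dotProduct,
    add_dotProduct, dotProduct_sub, dotProduct_add,
    Matrix.neg_mulVec, Matrix.mulVec_neg, neg_dotProduct, dotProduct_neg,
    dot_shiftL, ← Matrix.mulVec_mulVec, Matrix.mul_assoc]
  -- scalar identities
  have g1 : β ⬝ᵥ T *ᵥ β
      = β ⬝ᵥ S⁻¹ *ᵥ β - β ⬝ᵥ Abarᵀ *ᵥ Ωbar⁻¹ *ᵥ Abar *ᵥ β + β ⬝ᵥ Aᵀ *ᵥ Ω⁻¹ *ᵥ A *ᵥ β := by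
    rw [hT]
    simp only [Matrix.sub_mulVec, Matrix.add_mulVec, dotProduct_sub,
      dotProduct_add, ← Matrix.mulVec_mulVec, Matrix.mul_assoc]
  have g2 : γ ⬝ᵥ Ωbar⁻¹ *ᵥ Abar *ᵥ β = -(γ ⬝ᵥ Vᵀ *ᵥ Ω⁻¹ *ᵥ A *ᵥ β) := by
    rw [Matrix.mulVec_mulVec, hWA, Matrix.neg_mulVec, dotProduct_neg]
    simp only [← Matrix.mulVec_mulVec, Matrix.mul_assoc]
  have g4 : γ ⬝ᵥ Vᵀ *ᵥ Ω⁻¹ *ᵥ A *ᵥ β = β ⬝ᵥ Aᵀ *ᵥ Ω⁻¹ *ᵥ V *ᵥ γ := by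
    rw [Matrix.mulVec_mulVec, Matrix.mulVec_mulVec, dot_trans]
    simp only [Matrix.transpose_mul, Matrix.transpose_transpose, hQs,
      ← Matrix.mulVec_mulVec, Matrix.mul_assoc]
  have g3 : β ⬝ᵥ Abarᵀ *ᵥ Ωbar⁻¹ *ᵥ γ = -(β ⬝ᵥ Aᵀ *ᵥ Ω⁻¹ *ᵥ V *ᵥ γ) := by
    rw [Matrix.mulVec_mulVec, dot_trans, Matrix.transpose_mul, Matrix.transpose_transpose,
      hWs, ← Matrix.mulVec_mulVec, g2, g4]
  have g5 : c ⬝ᵥ Ω⁻¹ *ᵥ A *ᵥ β = β ⬝ᵥ Aᵀ *ᵥ Ω⁻¹ *ᵥ c := by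
    rw [Matrix.mulVec_mulVec, dot_trans, Matrix.transpose_mul, hQs,
      ← Matrix.mulVec_mulVec]
  have g6 : c ⬝ᵥ Ω⁻¹ *ᵥ V *ᵥ γ = γ ⬝ᵥ Vᵀ *ᵥ Ω⁻¹ *ᵥ c := by
    rw [Matrix.mulVec_mulVec, dot_trans, Matrix.transpose_mul, hQs,
      ← Matrix.mulVec_mulVec]
  have g7 : bstar ⬝ᵥ S⁻¹ *ᵥ β = β ⬝ᵥ S⁻¹ *ᵥ bstar := dot_symm' _ hPs _ _
  have g8 : γ ⬝ᵥ Ωbar⁻¹ *ᵥ bbar = -(γ ⬝ᵥ Vᵀ *ᵥ Ω⁻¹ *ᵥ c) := by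
    rw [hWb, dotProduct_neg, ← Matrix.mulVec_mulVec]
  have g9 : bbar ⬝ᵥ Ωbar⁻¹ *ᵥ γ = -(γ ⬝ᵥ Vᵀ *ᵥ Ω⁻¹ *ᵥ c) := by
    rw [dot_symm' _ hWs, g8]
  have g10 : bbar ⬝ᵥ Ωbar⁻¹ *ᵥ Abar *ᵥ β = β ⬝ᵥ Abarᵀ *ᵥ Ωbar⁻¹ *ᵥ bbar := by
    rw [Matrix.mulVec_mulVec, dot_trans, Matrix.transpose_mul, hWs, ← Matrix.mulVec_mulVec]
  have g12 : β ⬝ᵥ T *ᵥ Rbar *ᵥ bstar = β ⬝ᵥ S⁻¹ *ᵥ bstar := by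
    rw [Matrix.mulVec_mulVec, hRbar, ← Matrix.mul_assoc, hTΘ, Matrix.one_mul]
  have g13 : bstar ⬝ᵥ Rbarᵀ *ᵥ T *ᵥ β = β ⬝ᵥ S⁻¹ *ᵥ bstar := by
    rw [Matrix.mulVec_mulVec, dot_trans, Matrix.transpose_mul, Matrix.transpose_transpose,
      hTs, hRbar, ← Matrix.mul_assoc, hTΘ, Matrix.one_mul]
  have g15 : β ⬝ᵥ T *ᵥ sbar = β ⬝ᵥ Abarᵀ *ᵥ Ωbar⁻¹ *ᵥ bbar - β ⬝ᵥ Aᵀ *ᵥ Ω⁻¹ *ᵥ c := by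
    rw [hsbar, Matrix.mulVec_mulVec, hTΘ, Matrix.one_mulVec]
    simp only [dotProduct_sub, ← Matrix.mulVec_mulVec]
  have g14 : sbar ⬝ᵥ T *ᵥ β = β ⬝ᵥ T *ᵥ sbar := dot_symm' _ hTs _ _
  have g16 : γ ⬝ᵥ Ωbar⁻¹ *ᵥ γ = γ ⬝ᵥ Vᵀ *ᵥ Ω⁻¹ *ᵥ V *ᵥ γ := by
    rw [hWeq]
    simp only [← Matrix.mulVec_mulVec, Matrix.mul_assoc]
  rw [g1, g2, g3, g5, g6, g7, g8, g9, g10, g12, g13, g14, g15, g16, g4]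
  ring
end

section
/- For a d×d real symmetric positive definite matrix S, write φ_d(x; μ, S) := ((2π)^d · det S)^{−1/2} · exp(−(1/2)(x − μ)ᵀ S⁻¹ (x − μ)) for the d-variate Gaussian density. Let m, k, p ∈ ℕ, Σ a real m×m symmetric positive definite matrix, Ω a real p×p symmetric positive definite matrix, A a real p×m matrix, V a real p×k matrix with linearly independent columns, c ∈ ℝ^p, b* ∈ ℝ^m. Define Ω̄ = (VᵀΩ⁻¹V)⁻¹, Ā = −Ω̄VᵀΩ⁻¹A, b̄ = −Ω̄VᵀΩ⁻¹c, T = Σ⁻¹ − ĀᵀΩ̄⁻¹Ā + AᵀΩ⁻¹A, Θ̄ = T⁻¹, R̄ = Θ̄Σ⁻¹, s̄ = Θ̄(ĀᵀΩ̄⁻¹b̄ − AᵀΩ⁻¹c). Then Ω̄ and T are symmetric positive definite, and there exists a constant k(b*) > 0 such that for all β ∈ ℝ^m and γ ∈ ℝ^k: φ_m(β; b*, Σ) · φ_p(Aβ + Vγ + c; 0, Ω) = k(b*) · φ_m(β; R̄b* + s̄, Θ̄) · φ_k(γ; Āβ + b̄, Ω̄). -/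
open Matrix

lemma dot_tr {n m : Type*} [Fintype n] [Fintype m] (Z : Matrix n m ℝ) (x : n → ℝ) (y : m → ℝ) :
    x ⬝ᵥ Z *ᵥ y = y ⬝ᵥ Zᵀ *ᵥ x := by
  rw [dotProduct_mulVec, ← mulVec_transpose, dotProduct_comm]

lemma dot_shift {n m : Type*} [Fintype n] [Fintype m] (M : Matrix n m ℝ) (x : m → ℝ) (y : n → ℝ) :
    (M *ᵥ x) ⬝ᵥ y = x ⬝ᵥ Mᵀ *ᵥ y := by
  rw [dotProduct_comm, dot_tr]

lemma posdef_conj {p q : ℕ} (Q : Matrix (Fin p) (Fin p) ℝ) (hQ : Q.PosDef)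
    (V : Matrix (Fin p) (Fin q) ℝ)
    (hV : LinearIndependent ℝ (fun j : Fin q => (Vᵀ j : Fin p → ℝ))) :
    (Vᵀ * Q * V).PosDef := by
  refine PosDef.of_dotProduct_mulVec_pos ?_ ?_
  · have hQs : Qᵀ = Q := by
      rw [← conjTranspose_eq_transpose_of_trivial]; exact hQ.isHermitian
    have h1 : (Vᵀ * Q * V)ᴴ = Vᵀ * Q * V := by
      simp only [conjTranspose_eq_transpose_of_trivial, transpose_mul, transpose_transpose,
        hQs, Matrix.mul_assoc]
    exact h1
  · intro x hx
    have hVx : V *ᵥ x ≠ 0 := by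
      intro h
      apply hx
      have := Fintype.linearIndependent_iff.mp hV x ?_
      · funext i; exact this i
      · funext i
        have := congrFun h i
        simpa [mulVec, dotProduct, mul_comm] using this
    have := hQ.dotProduct_mulVec_pos hVx
    simpa [star_trivial, ← mulVec_mulVec, dot_tr, dotProduct_mulVec, vecMul_transpose,
      Matrix.mul_assoc] using this

lemma assemble (cS cΩ cΘ cΩb C e1 e2 f1 f2 : ℝ) (hΘ : cΘ ≠ 0) (hΩb : cΩb ≠ 0)
    (h : e1 + e2 = f1 + f2 + C) :
    cS * Real.exp (-(1 / 2) * e1) * (cΩ * Real.exp (-(1 / 2) * e2))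
      = cS * cΩ / (cΘ * cΩb) * Real.exp (-(1 / 2) * C) * (cΘ * Real.exp (-(1 / 2) * f1)) *
          (cΩb * Real.exp (-(1 / 2) * f2)) := by
  have harg : (-(1 / 2) : ℝ) * e1 + -(1 / 2) * e2
      = -(1 / 2) * C + (-(1 / 2) * f1 + -(1 / 2) * f2) := by linarith
  calc cS * Real.exp (-(1 / 2) * e1) * (cΩ * Real.exp (-(1 / 2) * e2))
      = cS * cΩ * Real.exp (-(1 / 2) * e1 + -(1 / 2) * e2) := by rw [Real.exp_add]; ring
    _ = cS * cΩ * (Real.exp (-(1 / 2) * C) *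
          (Real.exp (-(1 / 2) * f1) * Real.exp (-(1 / 2) * f2))) := by
        rw [harg, Real.exp_add, Real.exp_add]
    _ = _ := by field_simp

/-- The `d`-variate Gaussian density
`φ_d(x; μ, S) = ((2π)^d det S)^{−1/2} exp(−(1/2)(x−μ)ᵀ S⁻¹ (x−μ))`. -/
noncomputable def gaussPDF {d : ℕ} (x μ : Fin d → ℝ) (S : Matrix (Fin d) (Fin d) ℝ) : ℝ :=
  ((2 * Real.pi) ^ d * S.det) ^ (-(1 : ℝ) / 2) *
    Real.exp (-(1 / 2) * ((x - μ) ⬝ᵥ S⁻¹.mulVec (x - μ)))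

/-- Proposition 3.4, Gaussian factorization: `Ω̄` and `T` are
positive definite and the product of the two Gaussian densities factors, up to a
positive constant `κ` free of `(β, γ)`, as a product of two Gaussian densities. -/
theorem gaussian_density_factorization
    (m k p : ℕ)
    (S : Matrix (Fin m) (Fin m) ℝ) (hS : S.PosDef)
    (Ω : Matrix (Fin p) (Fin p) ℝ) (hΩ : Ω.PosDef)
    (A : Matrix (Fin p) (Fin m) ℝ) (V : Matrix (Fin p) (Fin k) ℝ)
    (hV : LinearIndependent ℝ (fun j : Fin k => (Vᵀ j : Fin p → ℝ)))
    (c : Fin p → ℝ) (bstar : Fin m → ℝ)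
    (Ωbar : Matrix (Fin k) (Fin k) ℝ) (hΩbar : Ωbar = (Vᵀ * Ω⁻¹ * V)⁻¹)
    (Abar : Matrix (Fin k) (Fin m) ℝ) (hAbar : Abar = -(Ωbar * Vᵀ * Ω⁻¹ * A))
    (bbar : Fin k → ℝ) (hbbar : bbar = -((Ωbar * Vᵀ * Ω⁻¹).mulVec c))
    (T : Matrix (Fin m) (Fin m) ℝ)
    (hT : T = S⁻¹ - Abarᵀ * Ωbar⁻¹ * Abar + Aᵀ * Ω⁻¹ * A)
    (Θbar : Matrix (Fin m) (Fin m) ℝ) (hΘbar : Θbar = T⁻¹)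
    (Rbar : Matrix (Fin m) (Fin m) ℝ) (hRbar : Rbar = Θbar * S⁻¹)
    (sbar : Fin m → ℝ)
    (hsbar : sbar = Θbar.mulVec ((Abarᵀ * Ωbar⁻¹).mulVec bbar - (Aᵀ * Ω⁻¹).mulVec c)) :
    Ωbar.PosDef ∧ T.PosDef ∧
      ∃ κ : ℝ, 0 < κ ∧ ∀ (β : Fin m → ℝ) (γ : Fin k → ℝ),
        gaussPDF β bstar S * gaussPDF (A.mulVec β + V.mulVec γ + c) 0 Ω
          = κ * gaussPDF β (Rbar.mulVec bstar + sbar) Θbar *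
              gaussPDF γ (Abar.mulVec β + bbar) Ωbar := by
  have hQpd : (Ω⁻¹).PosDef := hΩ.inv
  have hQs : (Ω⁻¹)ᵀ = Ω⁻¹ := by
    rw [← conjTranspose_eq_transpose_of_trivial]; exact hQpd.isHermitian
  have hWpd : (Vᵀ * Ω⁻¹ * V).PosDef := posdef_conj _ hQpd V hV
  have hΩbarpd : Ωbar.PosDef := by rw [hΩbar]; exact hWpd.inv
  have hWdet : IsUnit (Vᵀ * Ω⁻¹ * V).det := hWpd.det_pos.ne'.isUnit
  have hΩbarW : Ωbar * (Vᵀ * Ω⁻¹ * V) = 1 := by rw [hΩbar]; exact nonsing_inv_mul _ hWdet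
  have hΩbars : Ωbarᵀ = Ωbar := by
    rw [← conjTranspose_eq_transpose_of_trivial]; exact hΩbarpd.isHermitian
  have hΩbarinv : Ωbar⁻¹ = Vᵀ * Ω⁻¹ * V := by rw [hΩbar]; exact nonsing_inv_nonsing_inv _ hWdet
  have hcolM : ∀ (X : Matrix (Fin k) (Fin m) ℝ), Ωbar * (Vᵀ * (Ω⁻¹ * (V * X))) = X := by
    intro X
    have := congrArg (· * X) hΩbarW
    simpa [Matrix.mul_assoc] using this
  have hAbarT : Abarᵀ = -(Aᵀ * Ω⁻¹ * V * Ωbar) := by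
    rw [hAbar]; simp [transpose_mul, hQs, hΩbars, Matrix.mul_assoc]
  have hG : Abarᵀ * Ωbar⁻¹ * Abar = Aᵀ * Ω⁻¹ * V * Ωbar * Vᵀ * Ω⁻¹ * A := by
    rw [hAbarT, hAbar, hΩbarinv]
    simp only [Matrix.neg_mul, Matrix.mul_neg, neg_neg, Matrix.mul_assoc]
    rw [hcolM]
  have hTrep : T = S⁻¹ + ((1 - V * Ωbar * Vᵀ * Ω⁻¹) * A)ᵀ * Ω⁻¹ *
      ((1 - V * Ωbar * Vᵀ * Ω⁻¹) * A) := by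
    rw [hT, hG]
    have hNT : ((1 - V * Ωbar * Vᵀ * Ω⁻¹) * A)ᵀ = Aᵀ * (1 - Ω⁻¹ * V * Ωbar * Vᵀ) := by
      simp [transpose_mul, transpose_sub, hQs, hΩbars, Matrix.mul_assoc]
    rw [hNT]
    simp only [Matrix.mul_sub, Matrix.sub_mul, Matrix.mul_one, Matrix.one_mul,
      Matrix.mul_assoc]
    rw [hcolM]
    abel
  have hTpd : T.PosDef := by
    rw [hTrep]
    have hpsd := hQpd.posSemidef.conjTranspose_mul_mul_same ((1 - V * Ωbar * Vᵀ * Ω⁻¹) * A)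
    rw [conjTranspose_eq_transpose_of_trivial] at hpsd
    exact hS.inv.add_posSemidef hpsd
  have hTdet : IsUnit T.det := hTpd.det_pos.ne'.isUnit
  have hΘT : Θbar⁻¹ = T := by rw [hΘbar, nonsing_inv_nonsing_inv _ hTdet]
  have hTs : Tᵀ = T := by
    rw [← conjTranspose_eq_transpose_of_trivial]; exact hTpd.isHermitian
  have hΘs : Θbarᵀ = Θbar := by rw [hΘbar, transpose_nonsing_inv, hTs]
  have hvT : ∀ z : Fin m → ℝ, T *ᵥ (Θbar *ᵥ z) = z := by
    intro z; rw [mulVec_mulVec, hΘbar, mul_nonsing_inv _ hTdet, one_mulVec]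
  have hTv : ∀ z : Fin m → ℝ, Θbar *ᵥ (T *ᵥ z) = z := by
    intro z; rw [mulVec_mulVec, hΘbar, nonsing_inv_mul _ hTdet, one_mulVec]
  have hΩv : ∀ z : Fin k → ℝ, Ωbar *ᵥ (Vᵀ *ᵥ (Ω⁻¹ *ᵥ (V *ᵥ z))) = z := by
    intro z
    have := congrArg (fun M => M *ᵥ z) hΩbarW
    simpa only [← mulVec_mulVec, one_mulVec] using this
  have hWΩbar : (Vᵀ * Ω⁻¹ * V) * Ωbar = 1 := by rw [hΩbar]; exact mul_nonsing_inv _ hWdet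
  have hΩv2 : ∀ z : Fin k → ℝ, Vᵀ *ᵥ (Ω⁻¹ *ᵥ (V *ᵥ (Ωbar *ᵥ z))) = z := by
    intro z
    have := congrArg (fun M => M *ᵥ z) hWΩbar
    simpa only [← mulVec_mulVec, one_mulVec] using this
  have hiS : S⁻¹ = T + Aᵀ * Ω⁻¹ * V * Ωbar * Vᵀ * Ω⁻¹ * A - Aᵀ * Ω⁻¹ * A := by
    rw [hT, hG]; abel
  have hcolM2 : ∀ (X : Matrix (Fin k) (Fin p) ℝ), Ωbar * (Vᵀ * (Ω⁻¹ * (V * X))) = X := by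
    intro X
    have := congrArg (· * X) hΩbarW
    simpa [Matrix.mul_assoc] using this
  have hsbar' : sbar = Θbar *ᵥ ((Aᵀ * Ω⁻¹ * V * Ωbar * Vᵀ * Ω⁻¹) *ᵥ c - (Aᵀ * Ω⁻¹) *ᵥ c) := by
    rw [hsbar, hbbar, hAbarT, hΩbarinv]
    simp only [Matrix.mulVec_neg, Matrix.neg_mulVec, mulVec_mulVec, Matrix.neg_mul,
      Matrix.mul_neg, neg_neg, Matrix.mul_assoc]
    rw [hcolM2]
  -- the exponent identity
  have key : ∀ (β : Fin m → ℝ) (γ : Fin k → ℝ),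
      (β - bstar) ⬝ᵥ S⁻¹ *ᵥ (β - bstar)
        + (A *ᵥ β + V *ᵥ γ + c) ⬝ᵥ Ω⁻¹ *ᵥ (A *ᵥ β + V *ᵥ γ + c)
      = (β - (Rbar *ᵥ bstar + sbar)) ⬝ᵥ Θbar⁻¹ *ᵥ (β - (Rbar *ᵥ bstar + sbar))
        + (γ - (Abar *ᵥ β + bbar)) ⬝ᵥ Ωbar⁻¹ *ᵥ (γ - (Abar *ᵥ β + bbar))
        + (bstar ⬝ᵥ S⁻¹ *ᵥ bstar + c ⬝ᵥ Ω⁻¹ *ᵥ c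
           - (Rbar *ᵥ bstar + sbar) ⬝ᵥ T *ᵥ (Rbar *ᵥ bstar + sbar)
           - bbar ⬝ᵥ Ωbar⁻¹ *ᵥ bbar) := by
    intro β γ
    simp only [hΘT, hΩbarinv, hRbar, hsbar', hAbar, hbbar, hiS]
    simp only [Matrix.add_mulVec, Matrix.sub_mulVec, Matrix.neg_mulVec, Matrix.mulVec_add,
      Matrix.mulVec_sub, Matrix.mulVec_neg, ← Matrix.mulVec_mulVec, dotProduct_add,
      add_dotProduct, dotProduct_sub, sub_dotProduct, dotProduct_neg, neg_dotProduct,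
      dot_shift, transpose_transpose, hQs, hΩbars, hTs, hΘs, hTv, hvT, hΩv, hΩv2]
    ring_nf
  -- assemble the densities
  have hΘpd : Θbar.PosDef := by rw [hΘbar]; exact hTpd.inv
  have hcpos : ∀ (d : ℕ) (M : Matrix (Fin d) (Fin d) ℝ), M.PosDef →
      0 < ((2 * Real.pi) ^ d * M.det) ^ (-(1 : ℝ) / 2) := by
    intro d M hM
    have h1 : (0 : ℝ) < (2 * Real.pi) ^ d * M.det := by
      have := hM.det_pos
      positivity
    exact Real.rpow_pos_of_pos h1 _
  set C : ℝ := bstar ⬝ᵥ S⁻¹ *ᵥ bstar + c ⬝ᵥ Ω⁻¹ *ᵥ c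
      - (Rbar *ᵥ bstar + sbar) ⬝ᵥ T *ᵥ (Rbar *ᵥ bstar + sbar)
      - bbar ⬝ᵥ Ωbar⁻¹ *ᵥ bbar with hC
  refine ⟨hΩbarpd, hTpd, ⟨((2 * Real.pi) ^ m * S.det) ^ (-(1 : ℝ) / 2) *
      ((2 * Real.pi) ^ p * Ω.det) ^ (-(1 : ℝ) / 2) /
      (((2 * Real.pi) ^ m * Θbar.det) ^ (-(1 : ℝ) / 2) *
       ((2 * Real.pi) ^ k * Ωbar.det) ^ (-(1 : ℝ) / 2)) * Real.exp (-(1 / 2) * C), ?_, ?_⟩⟩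
  · have h1 := hcpos m S hS
    have h2 := hcpos p Ω hΩ
    have h3 := hcpos m Θbar hΘpd
    have h4 := hcpos k Ωbar hΩbarpd
    positivity
  · intro β γ
    have hk := key β γ
    have h3 := (hcpos m Θbar hΘpd).ne'
    have h4 := (hcpos k Ωbar hΩbarpd).ne'
    simp only [gaussPDF, sub_zero]
    exact assemble _ _ _ _ C _ _ _ _ h3 h4 (by linarith [hk])
end

section
/- Let m, k, p ∈ ℕ. Let Σ be a real m×m symmetric positive definite matrix, Ω a real p×p symmetric positive definite matrix, A a real p×m matrix, and V a real p×k matrix with linearly independent columns. Define Ω̄ = (VᵀΩ⁻¹V)⁻¹ and Ā = −Ω̄VᵀΩ⁻¹A. Then the matrix Σ⁻¹ − ĀᵀΩ̄⁻¹Ā + AᵀΩ⁻¹A is symmetric positive definite. -/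
open Matrix

/-!
With `W = Vᵀ Ω⁻¹ V` (positive definite since `V` is injective) we have `Ω̄⁻¹ = W` and
`Āᵀ Ω̄⁻¹ Ā = Aᵀ Ω⁻¹ V W⁻¹ Vᵀ Ω⁻¹ A`, so the matrix equals `Σ⁻¹ + Aᵀ (Ω⁻¹ - Ω⁻¹ V W⁻¹ Vᵀ Ω⁻¹) A`.
The middle factor is the Schur complement of `W` in the positive semidefinite block matrix
`[V 1]ᵀ Ω⁻¹ [V 1]`, hence positive semidefinite, and positive definite plus positive semidefinite
is positive definite.
-/

namespace Matrix

variable {m n p K : Type*} [Fintype n] [Fintype p] [DecidableEq n]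

theorem conjTranspose_mul_inv_inv_mul_eq [CommRing K] [StarRing K] {M : Matrix p p K}
    (hM : M.IsHermitian) {V : Matrix p n K} (hW : IsUnit (Vᴴ * M * V).det) (A : Matrix p m K) :
    ((Vᴴ * M * V)⁻¹ * Vᴴ * M * A)ᴴ * ((Vᴴ * M * V)⁻¹)⁻¹ * ((Vᴴ * M * V)⁻¹ * Vᴴ * M * A)
      = Aᴴ * (M * V * (Vᴴ * M * V)⁻¹ * Vᴴ * M) * A := by
  set W := Vᴴ * M * V
  have hWinv : W⁻¹ᴴ = W⁻¹ := (isHermitian_conjTranspose_mul_mul V hM).inv.eq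
  rw [nonsing_inv_nonsing_inv _ hW]
  simp only [conjTranspose_mul, conjTranspose_conjTranspose, hWinv, hM.eq, Matrix.mul_assoc,
    mul_nonsing_inv_cancel_left _ _ hW]

theorem PosSemidef.schurComplement_conjTranspose_mul_mul [DecidableEq p] [Field K]
    [PartialOrder K] [StarRing K] [StarOrderedRing K] {M : Matrix p p K} (hM : M.PosSemidef)
    {V : Matrix p n K} (hW : (Vᴴ * M * V).PosDef) :
    (M - M * V * (Vᴴ * M * V)⁻¹ * Vᴴ * M).PosSemidef := by
  have : Invertible (Vᴴ * M * V) := hW.isUnit.invertible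
  have hblocks : fromBlocks (Vᴴ * M * V) (Vᴴ * M) (Vᴴ * M)ᴴ M
      = (fromCols V 1)ᴴ * M * fromCols V 1 := by
    rw [conjTranspose_fromCols_eq_fromRows_conjTranspose, conjTranspose_mul, hM.isHermitian.eq]
    simp only [Matrix.mul_assoc, conjTranspose_conjTranspose, conjTranspose_one, fromRows_mul,
      one_mul, mul_fromCols, Matrix.mul_one, fromCols_fromRows_eq_fromBlocks]
  have hcompl := (hW.fromBlocks₁₁ (Vᴴ * M) M).mp (hblocks ▸ hM.conjTranspose_mul_mul_same _)
  simpa only [Matrix.mul_assoc, conjTranspose_mul, hM.isHermitian.eq, conjTranspose_conjTranspose]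
    using hcompl

end Matrix

/-- positive definiteness of `Θ̄⁻¹ = Σ⁻¹ − Āᵀ Ω̄⁻¹ Ā + Aᵀ Ω⁻¹ A`
for `Ω̄ = (Vᵀ Ω⁻¹ V)⁻¹` and `Ā = −Ω̄ Vᵀ Ω⁻¹ A`, when `Σ`, `Ω` are positive
definite and `V` has linearly independent columns. -/
theorem theta_bar_inv_posDef
    (m k p : ℕ)
    (S : Matrix (Fin m) (Fin m) ℝ) (hS : S.PosDef)
    (Ω : Matrix (Fin p) (Fin p) ℝ) (hΩ : Ω.PosDef)
    (A : Matrix (Fin p) (Fin m) ℝ) (V : Matrix (Fin p) (Fin k) ℝ)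
    (hV : LinearIndependent ℝ (fun j : Fin k => (Vᵀ j : Fin p → ℝ)))
    (Ωbar : Matrix (Fin k) (Fin k) ℝ) (hΩbar : Ωbar = (Vᵀ * Ω⁻¹ * V)⁻¹)
    (Abar : Matrix (Fin k) (Fin m) ℝ) (hAbar : Abar = -(Ωbar * Vᵀ * Ω⁻¹ * A)) :
    (S⁻¹ - Abarᵀ * Ωbar⁻¹ * Abar + Aᵀ * Ω⁻¹ * A).PosDef := by
  have hW : (Vᴴ * Ω⁻¹ * V).PosDef :=
    hΩ.inv.conjTranspose_mul_mul_same (mulVec_injective_iff.mpr hV)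
  subst hΩbar hAbar
  simp only [← conjTranspose_eq_transpose_of_trivial, conjTranspose_neg, Matrix.neg_mul,
    Matrix.mul_neg, neg_neg]
  rw [conjTranspose_mul_inv_inv_mul_eq hΩ.inv.isHermitian ((isUnit_iff_isUnit_det _).mp hW.isUnit),
    sub_add_eq_add_sub, add_sub_assoc, ← Matrix.sub_mul, ← Matrix.mul_sub]
  have hSchur := hΩ.inv.posSemidef.schurComplement_conjTranspose_mul_mul hW
  exact hS.inv.add_posSemidef (hSchur.conjTranspose_mul_mul_same A)
end

section
/- For a real symmetric matrix B, let λ_max(B) denote its largest eigenvalue. Let n ≥ 1 be a natural number, m, p, k ∈ ℕ, and let Σ (m×m), Ω (p×p), Q (k×k) be real symmetric positive definite matrices, A a real p×m matrix, and R a real p×k matrix. Define M = Σ⁻¹ + Aᵀ(Ω + R·Q⁻¹·Rᵀ)⁻¹A and u₀ = max(λ_max(Σ), λ_max(AᵀΩ⁻¹A)). Then for all indices i, j ∈ {1,…,m}: |(n⁻¹·Σ·M·Σ)_{ij}| ≤ n⁻¹·u₀·(1 + u₀²). -/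
open Matrix

/-- The largest eigenvalue of a real (symmetric) matrix, as the supremum of its
real spectrum. -/
noncomputable def lambdaMax {d : ℕ} (B : Matrix (Fin d) (Fin d) ℝ) : ℝ :=
  sSup (spectrum ℝ B)

namespace FisherAux

variable {d : ℕ}

lemma dot_symm {P : Matrix (Fin d) (Fin d) ℝ} (hP : P.IsHermitian) (u v : Fin d → ℝ) :
    u ⬝ᵥ P *ᵥ v = v ⬝ᵥ P *ᵥ u := by
  have hPt : Pᵀ = P := by
    have := hP.eq
    rwa [conjTranspose_eq_transpose_of_trivial] at this
  rw [dotProduct_mulVec, ← mulVec_transpose, hPt, dotProduct_comm]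

lemma eig_le_lambdaMax {B : Matrix (Fin d) (Fin d) ℝ} (hB : B.IsHermitian) (i : Fin d) :
    hB.eigenvalues i ≤ lambdaMax B :=
  le_csSup Matrix.finite_real_spectrum.bddAbove (hB.eigenvalues_mem_spectrum_real i)

lemma psd_smul_one_sub {B : Matrix (Fin d) (Fin d) ℝ} (hB : B.IsHermitian) {c : ℝ}
    (h : ∀ i, hB.eigenvalues i ≤ c) :
    (c • (1 : Matrix (Fin d) (Fin d) ℝ) - B).PosSemidef := by
  classical
  set U : Matrix (Fin d) (Fin d) ℝ := (hB.eigenvectorUnitary : Matrix (Fin d) (Fin d) ℝ)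
  have hUU : U * star U = 1 := (Matrix.mem_unitaryGroup_iff).mp hB.eigenvectorUnitary.2
  have hD : B = U * diagonal hB.eigenvalues * star U := by
    have := hB.spectral_theorem
    simpa using this
  have key : c • (1 : Matrix (Fin d) (Fin d) ℝ) - B
      = U * diagonal (fun i => c - hB.eigenvalues i) * star U := by
    have h1 : (diagonal (fun i => c - hB.eigenvalues i) : Matrix (Fin d) (Fin d) ℝ)
        = c • 1 - diagonal hB.eigenvalues := by
      rw [smul_one_eq_diagonal]
      rw [← diagonal_sub]
    rw [h1, Matrix.mul_sub, Matrix.sub_mul, ← hD]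
    congr 1
    rw [Matrix.mul_smul, Matrix.mul_one, Matrix.smul_mul, hUU]
  rw [key, Matrix.star_eq_conjTranspose]
  exact (Matrix.PosSemidef.diagonal (fun i => sub_nonneg.mpr (h i))).mul_mul_conjTranspose_same U


lemma quad_le_of_eig {B : Matrix (Fin d) (Fin d) ℝ} (hB : B.IsHermitian) {c : ℝ}
    (h : ∀ i, hB.eigenvalues i ≤ c) (x : Fin d → ℝ) :
    x ⬝ᵥ B *ᵥ x ≤ c * (x ⬝ᵥ x) := by
  have h0 := (psd_smul_one_sub hB h).dotProduct_mulVec_nonneg x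
  simp only [star_trivial, Matrix.sub_mulVec, Matrix.smul_mulVec, Matrix.one_mulVec,
    dotProduct_sub, dotProduct_smul, smul_eq_mul] at h0
  linarith

lemma quad_le_lambdaMax {B : Matrix (Fin d) (Fin d) ℝ} (hB : B.IsHermitian) (x : Fin d → ℝ) :
    x ⬝ᵥ B *ᵥ x ≤ lambdaMax B * (x ⬝ᵥ x) :=
  quad_le_of_eig hB (eig_le_lambdaMax hB) x

lemma quad_sq_le {B : Matrix (Fin d) (Fin d) ℝ} (hB : B.PosSemidef) {c : ℝ}
    (h : ∀ i, hB.1.eigenvalues i ≤ c) (x : Fin d → ℝ) :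
    x ⬝ᵥ (B * B) *ᵥ x ≤ c ^ 2 * (x ⬝ᵥ x) := by
  classical
  set U : Matrix (Fin d) (Fin d) ℝ := (hB.1.eigenvectorUnitary : Matrix (Fin d) (Fin d) ℝ)
  have hUU : U * star U = 1 := (Matrix.mem_unitaryGroup_iff).mp hB.1.eigenvectorUnitary.2
  have hsUU : star U * U = 1 := (Matrix.mem_unitaryGroup_iff').mp hB.1.eigenvectorUnitary.2
  have hD : B = U * diagonal hB.1.eigenvalues * star U := by
    have := hB.1.spectral_theorem
    simpa using this
  have hs : ∀ X : Matrix (Fin d) (Fin d) ℝ, star U * (U * X) = X := fun X => by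
    rw [← Matrix.mul_assoc, hsUU, Matrix.one_mul]
  have hBB : B * B = U * (diagonal hB.1.eigenvalues * diagonal hB.1.eigenvalues) * star U := by
    conv_lhs => rw [hD]
    simp only [Matrix.mul_assoc, hs]
  have hpsd : (c ^ 2 • (1 : Matrix (Fin d) (Fin d) ℝ) - B * B).PosSemidef := by
    have key : c ^ 2 • (1 : Matrix (Fin d) (Fin d) ℝ) - B * B
        = U * diagonal (fun i => c ^ 2 - hB.1.eigenvalues i * hB.1.eigenvalues i) * star U := by
      have h1 : (diagonal (fun i => c ^ 2 - hB.1.eigenvalues i * hB.1.eigenvalues i) :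
          Matrix (Fin d) (Fin d) ℝ)
          = c ^ 2 • 1 - diagonal hB.1.eigenvalues * diagonal hB.1.eigenvalues := by
        rw [smul_one_eq_diagonal, diagonal_mul_diagonal, ← diagonal_sub]
      rw [h1, Matrix.mul_sub, Matrix.sub_mul, ← hBB]
      congr 1
      rw [Matrix.mul_smul, Matrix.mul_one, Matrix.smul_mul, hUU]
    rw [key, Matrix.star_eq_conjTranspose]
    refine (Matrix.PosSemidef.diagonal (fun i => sub_nonneg.mpr ?_)).mul_mul_conjTranspose_same U
    have h0 := hB.eigenvalues_nonneg i
    nlinarith [h i]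
  have h0 := hpsd.dotProduct_mulVec_nonneg x
  simp only [star_trivial, Matrix.sub_mulVec, Matrix.smul_mulVec, Matrix.one_mulVec,
    dotProduct_sub, dotProduct_smul, smul_eq_mul] at h0
  linarith

lemma cs_psd {P : Matrix (Fin d) (Fin d) ℝ} (hP : P.PosSemidef) (u v : Fin d → ℝ) :
    (u ⬝ᵥ P *ᵥ v) ^ 2 ≤ (u ⬝ᵥ P *ᵥ u) * (v ⬝ᵥ P *ᵥ v) := by
  have hsym := dot_symm hP.1 v u
  have key : ∀ t : ℝ, 0 ≤ (v ⬝ᵥ P *ᵥ v) * (t * t) + (2 * (u ⬝ᵥ P *ᵥ v)) * t + (u ⬝ᵥ P *ᵥ u) := by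
    intro t
    have h0 := hP.dotProduct_mulVec_nonneg (u + t • v)
    simp only [star_trivial, Matrix.mulVec_add, Matrix.mulVec_smul, dotProduct_add,
      add_dotProduct, dotProduct_smul, smul_dotProduct, smul_eq_mul] at h0
    rw [hsym] at h0
    nlinarith [h0]
  have hd := discrim_le_zero key
  simp only [discrim] at hd
  nlinarith [hd]

lemma inv_quad_le {Ω C : Matrix (Fin d) (Fin d) ℝ} (hΩ : Ω.PosDef) (hC : C.PosDef)
    (h : ∀ x : Fin d → ℝ, x ⬝ᵥ Ω *ᵥ x ≤ x ⬝ᵥ C *ᵥ x) (x : Fin d → ℝ) :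
    x ⬝ᵥ C⁻¹ *ᵥ x ≤ x ⬝ᵥ Ω⁻¹ *ᵥ x := by
  classical
  set y := C⁻¹ *ᵥ x with hy
  have hCdet : IsUnit C.det := isUnit_iff_ne_zero.mpr hC.det_pos.ne'
  have hΩdet : IsUnit Ω.det := isUnit_iff_ne_zero.mpr hΩ.det_pos.ne'
  have hCy : C *ᵥ y = x := by
    rw [hy, Matrix.mulVec_mulVec, Matrix.mul_nonsing_inv _ hCdet, Matrix.one_mulVec]
  have h1 : x ⬝ᵥ C⁻¹ *ᵥ x = y ⬝ᵥ x := dotProduct_comm x y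
  have h2 : y ⬝ᵥ Ω *ᵥ (Ω⁻¹ *ᵥ x) = y ⬝ᵥ x := by
    rw [Matrix.mulVec_mulVec, Matrix.mul_nonsing_inv _ hΩdet, Matrix.one_mulVec]
  have h4 : (Ω⁻¹ *ᵥ x) ⬝ᵥ Ω *ᵥ (Ω⁻¹ *ᵥ x) = x ⬝ᵥ Ω⁻¹ *ᵥ x := by
    rw [Matrix.mulVec_mulVec, Matrix.mul_nonsing_inv _ hΩdet, Matrix.one_mulVec]
    exact dotProduct_comm _ x
  have h3 := cs_psd hΩ.posSemidef y (Ω⁻¹ *ᵥ x)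
  rw [h2, h4] at h3
  have h5 : y ⬝ᵥ Ω *ᵥ y ≤ y ⬝ᵥ x := by
    have := h y
    rwa [show y ⬝ᵥ C *ᵥ y = y ⬝ᵥ x by rw [hCy]] at this
  have hyx : 0 ≤ y ⬝ᵥ x := by
    rw [← h1]
    simpa using hC.inv.posSemidef.dotProduct_mulVec_nonneg x
  have hΩix : 0 ≤ x ⬝ᵥ Ω⁻¹ *ᵥ x := by simpa using hΩ.inv.posSemidef.dotProduct_mulVec_nonneg x
  have hΩy : 0 ≤ y ⬝ᵥ Ω *ᵥ y := by simpa using hΩ.posSemidef.dotProduct_mulVec_nonneg y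
  rw [h1]
  nlinarith

end FisherAux

/-- Lemma 4.2: entrywise bound on the inverse observed Fisher
information `n⁻¹ Σ M Σ` with `M = Σ⁻¹ + Aᵀ(Ω + R Q⁻¹ Rᵀ)⁻¹A`:
every entry is bounded in absolute value by `n⁻¹ u₀ (1 + u₀²)` where
`u₀ = max(λ_max(Σ), λ_max(Aᵀ Ω⁻¹ A))`. -/
theorem inverse_fisher_information_entrywise_bound
    (n m p k : ℕ) (hn : 1 ≤ n)
    (S : Matrix (Fin m) (Fin m) ℝ) (hS : S.PosDef)
    (Ω : Matrix (Fin p) (Fin p) ℝ) (hΩ : Ω.PosDef)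
    (Q : Matrix (Fin k) (Fin k) ℝ) (hQ : Q.PosDef)
    (A : Matrix (Fin p) (Fin m) ℝ) (R : Matrix (Fin p) (Fin k) ℝ)
    (M : Matrix (Fin m) (Fin m) ℝ)
    (hM : M = S⁻¹ + Aᵀ * (Ω + R * Q⁻¹ * Rᵀ)⁻¹ * A)
    (u0 : ℝ) (hu0 : u0 = max (lambdaMax S) (lambdaMax (Aᵀ * Ω⁻¹ * A))) :
    ∀ i j : Fin m, |((n : ℝ)⁻¹ • (S * M * S)) i j| ≤ (n : ℝ)⁻¹ * (u0 * (1 + u0 ^ 2)) := by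
  intro i j
  classical
  set C : Matrix (Fin p) (Fin p) ℝ := Ω + R * Q⁻¹ * Rᵀ with hCdef
  -- basic symmetry facts
  have hSt : Sᵀ = S := by
    have := hS.1.eq; rwa [conjTranspose_eq_transpose_of_trivial] at this
  -- C is positive definite
  have hRQ : (R * Q⁻¹ * Rᵀ).PosSemidef := by
    rw [← conjTranspose_eq_transpose_of_trivial R]
    exact hQ.inv.posSemidef.mul_mul_conjTranspose_same R
  have hC : C.PosDef := hΩ.add_posSemidef hRQ
  -- quadratic comparison Ω ≤ C
  have hΩC : ∀ x : Fin p → ℝ, x ⬝ᵥ Ω *ᵥ x ≤ x ⬝ᵥ C *ᵥ x := by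
    intro x
    rw [hCdef, Matrix.add_mulVec, dotProduct_add]
    have := hRQ.dotProduct_mulVec_nonneg x
    simp only [star_trivial] at this
    linarith
  -- G is symmetric PSD
  have hG : (Aᵀ * Ω⁻¹ * A).PosSemidef := by
    rw [← conjTranspose_eq_transpose_of_trivial A]
    exact hΩ.inv.posSemidef.conjTranspose_mul_mul_same A
  have hGC : (Aᵀ * C⁻¹ * A).PosSemidef := by
    rw [← conjTranspose_eq_transpose_of_trivial A]
    exact hC.inv.posSemidef.conjTranspose_mul_mul_same A
  -- X = S M S is PSD
  have hMpsd : M.PosSemidef := by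
    rw [hM]
    exact hS.inv.posSemidef.add hGC
  have hXpsd : (S * M * S).PosSemidef := by
    have := hMpsd.conjTranspose_mul_mul_same S
    rwa [hS.1.eq] at this
  -- decomposition of X
  have hSinv : S * S⁻¹ = 1 :=
    Matrix.mul_nonsing_inv _ (isUnit_iff_ne_zero.mpr hS.det_pos.ne')
  have hXeq : S * M * S = S + S * Aᵀ * C⁻¹ * (A * S) := by
    rw [hM, Matrix.mul_add, hSinv, Matrix.add_mul, Matrix.one_mul]
    simp only [Matrix.mul_assoc]
  -- positivity of u0
  have hlamS : 0 < lambdaMax S :=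
    lt_of_lt_of_le (hS.eigenvalues_pos i) (FisherAux.eig_le_lambdaMax hS.1 i)
  have hu0S : lambdaMax S ≤ u0 := hu0 ▸ le_max_left _ _
  have hu0G : lambdaMax (Aᵀ * Ω⁻¹ * A) ≤ u0 := hu0 ▸ le_max_right _ _
  have hu0pos : 0 < u0 := lt_of_lt_of_le hlamS hu0S
  -- the key quadratic bound
  have hquad : ∀ x : Fin m → ℝ,
      x ⬝ᵥ (S * M * S) *ᵥ x ≤ (u0 * (1 + u0 ^ 2)) * (x ⬝ᵥ x) := by
    intro x
    have hxx : (0:ℝ) ≤ x ⬝ᵥ x := by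
      refine Finset.sum_nonneg fun r _ => mul_self_nonneg _
    set w : Fin m → ℝ := S *ᵥ x with hw
    set z : Fin p → ℝ := A *ᵥ w with hz
    -- split the quadratic form
    have hsplit : x ⬝ᵥ (S * M * S) *ᵥ x = x ⬝ᵥ S *ᵥ x + z ⬝ᵥ C⁻¹ *ᵥ z := by
      rw [hXeq, Matrix.add_mulVec, dotProduct_add]
      congr 1
      have hT : S * Aᵀ = (A * S)ᵀ := by
        rw [Matrix.transpose_mul, hSt]
      rw [← Matrix.mulVec_mulVec, ← Matrix.mulVec_mulVec, dotProduct_mulVec, hT,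
        Matrix.vecMul_transpose, ← Matrix.mulVec_mulVec, hz, hw]
    -- first term
    have h1 : x ⬝ᵥ S *ᵥ x ≤ u0 * (x ⬝ᵥ x) :=
      (FisherAux.quad_le_lambdaMax hS.1 x).trans (by nlinarith)
    -- second term
    have h2 : z ⬝ᵥ C⁻¹ *ᵥ z ≤ z ⬝ᵥ Ω⁻¹ *ᵥ z := FisherAux.inv_quad_le hΩ hC hΩC z
    have h3 : w ⬝ᵥ (Aᵀ * Ω⁻¹ * A) *ᵥ w = z ⬝ᵥ Ω⁻¹ *ᵥ z := by
      rw [Matrix.mul_assoc, ← Matrix.mulVec_mulVec, dotProduct_mulVec,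
        Matrix.vecMul_transpose, ← Matrix.mulVec_mulVec, hz]
    have h4 : w ⬝ᵥ (Aᵀ * Ω⁻¹ * A) *ᵥ w ≤ u0 * (w ⬝ᵥ w) := by
      have hww : (0:ℝ) ≤ w ⬝ᵥ w := Finset.sum_nonneg fun r _ => mul_self_nonneg _
      exact (FisherAux.quad_le_lambdaMax hG.1 w).trans (by nlinarith)
    have h5 : w ⬝ᵥ w = x ⬝ᵥ (S * S) *ᵥ x := by
      rw [← Matrix.mulVec_mulVec, dotProduct_mulVec, ← hSt, Matrix.vecMul_transpose, hSt, hw]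
      exact dotProduct_comm _ _
    have h6 : x ⬝ᵥ (S * S) *ᵥ x ≤ (lambdaMax S) ^ 2 * (x ⬝ᵥ x) :=
      FisherAux.quad_sq_le hS.posSemidef (FisherAux.eig_le_lambdaMax hS.1) x
    have h7 : (lambdaMax S) ^ 2 * (x ⬝ᵥ x) ≤ u0 ^ 2 * (x ⬝ᵥ x) := by
      have hle : (lambdaMax S) ^ 2 ≤ u0 ^ 2 := by nlinarith
      exact mul_le_mul_of_nonneg_right hle hxx
    rw [hsplit]
    nlinarith [h2, h3, h4, h5, h6, h7, h1]
  -- entrywise bound via Cauchy–Schwarz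
  set K : ℝ := u0 * (1 + u0 ^ 2) with hK
  have hK0 : 0 ≤ K := by positivity
  have hone : ∀ r : Fin m, (Pi.single r 1 : Fin m → ℝ) ⬝ᵥ Pi.single r 1 = 1 := by
    intro r; rw [single_dotProduct]; simp
  have hdiag : ∀ r : Fin m,
      (Pi.single r 1 : Fin m → ℝ) ⬝ᵥ (S * M * S) *ᵥ Pi.single r 1 ≤ K := by
    intro r
    have := hquad (Pi.single r 1)
    rwa [hone r, mul_one] at this
  have hentry : (S * M * S) i j
      = (Pi.single i 1 : Fin m → ℝ) ⬝ᵥ (S * M * S) *ᵥ Pi.single j 1 := by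
    rw [Matrix.mulVec_single, single_dotProduct]
    simp
  have hcs := FisherAux.cs_psd hXpsd (Pi.single i 1) (Pi.single j 1)
  have hii := hdiag i
  have hjj := hdiag j
  have hiinn : 0 ≤ (Pi.single i 1 : Fin m → ℝ) ⬝ᵥ (S * M * S) *ᵥ Pi.single i 1 := by
    simpa using hXpsd.dotProduct_mulVec_nonneg (Pi.single i 1)
  have hjjnn : 0 ≤ (Pi.single j 1 : Fin m → ℝ) ⬝ᵥ (S * M * S) *ᵥ Pi.single j 1 := by
    simpa using hXpsd.dotProduct_mulVec_nonneg (Pi.single j 1)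
  have hsq : ((S * M * S) i j) ^ 2 ≤ K ^ 2 := by
    rw [hentry]
    calc ((Pi.single i 1 : Fin m → ℝ) ⬝ᵥ (S * M * S) *ᵥ Pi.single j 1) ^ 2
        ≤ _ * _ := hcs
      _ ≤ K ^ 2 := by nlinarith
  have habs : |(S * M * S) i j| ≤ K := abs_le_of_sq_le_sq hsq hK0
  have hnpos : (0:ℝ) ≤ (n : ℝ)⁻¹ := by positivity
  calc |((n : ℝ)⁻¹ • (S * M * S)) i j| = (n : ℝ)⁻¹ * |(S * M * S) i j| := by
        rw [Matrix.smul_apply, smul_eq_mul, abs_mul, abs_of_nonneg hnpos]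
    _ ≤ (n : ℝ)⁻¹ * K := by
        exact mul_le_mul_of_nonneg_left habs hnpos
end

section
/- Let m, k ≥ 1 be natural numbers, Θ̄ a real m×m and Ω̄ a real k×k symmetric positive definite matrix, Ā a real k×m matrix, b̄ ∈ ℝ^k, ψ : ℝ^k → ℝ a convex differentiable function, and z ∈ ℝ^m. Define h₀(b,g) = (1/2)bᵀΘ̄⁻¹b + (1/2)(g − Āb − b̄)ᵀΩ̄⁻¹(g − Āb − b̄) + ψ(g) for (b,g) ∈ ℝ^m × ℝ^k, and its partial convex conjugate h₀*(η) = sup over (b,g) ∈ ℝ^m × ℝ^k of (⟨b, η⟩ − h₀(b,g)), taking values in the extended reals. Suppose g* ∈ ℝ^k minimizes g ↦ (1/2)(g − Āz − b̄)ᵀΩ̄⁻¹(g − Āz − b̄) + ψ(g) over ℝ^k, and set η* = Θ̄⁻¹z + ĀᵀΩ̄⁻¹(Āz + b̄ − g*). Then h₀*(η*) = ⟨z, η*⟩ − h₀(z, g*), and for every η ∈ ℝ^m, ⟨z, η⟩ − h₀*(η) ≤ ⟨z, η*⟩ − h₀*(η*) in the extended reals; i.e., η* maximizes η ↦ ⟨z,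 η⟩ − h₀*(η), with maximum value h₀(z, g*) = inf_{g} h₀(z, g). -/
open Matrix

private lemma symm_dot_aux {n : Type*} [Fintype n] (M : Matrix n n ℝ) (h : Mᵀ = M)
    (x y : n → ℝ) : x ⬝ᵥ M *ᵥ y = y ⬝ᵥ M *ᵥ x := by
  rw [dotProduct_mulVec, ← Matrix.mulVec_transpose, h, dotProduct_comm]

private lemma quad_lower_aux {n : Type*} [Fintype n] (M : Matrix n n ℝ) (hsym : Mᵀ = M)
    (hpsd : ∀ v : n → ℝ, 0 ≤ v ⬝ᵥ M *ᵥ v) (x y : n → ℝ) :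
    (M *ᵥ y) ⬝ᵥ (x - y) ≤ 1/2 * (x ⬝ᵥ M *ᵥ x) - 1/2 * (y ⬝ᵥ M *ᵥ y) := by
  have h := hpsd (x - y)
  have e1 : x ⬝ᵥ M *ᵥ y = y ⬝ᵥ M *ᵥ x := symm_dot_aux M hsym x y
  rw [Matrix.mulVec_sub, dotProduct_sub, sub_dotProduct, sub_dotProduct] at h
  have e2 : (M *ᵥ y) ⬝ᵥ (x - y) = x ⬝ᵥ M *ᵥ y - y ⬝ᵥ M *ᵥ y := by
    rw [dotProduct_comm, sub_dotProduct]
  linarith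

/-- solution of the reparametrized maximum likelihood problem in
the proof of Theorem 4.1: `η* = Θ̄⁻¹z + Āᵀ Ω̄⁻¹ (Āz + b̄ − g*)` maximizes
`η ↦ ⟨z, η⟩ − h₀*(η)` (with `h₀*` the partial convex conjugate of `h₀`), the
conjugate is attained at `(z, g*)`, and the maximum value is
`h₀(z, g*) = inf_g h₀(z, g)`. -/
theorem reparametrized_mle_solution
    (m k : ℕ) (hm : 1 ≤ m) (hk : 1 ≤ k)
    (Θbar : Matrix (Fin m) (Fin m) ℝ) (hΘ : Θbar.PosDef)
    (Ωbar : Matrix (Fin k) (Fin k) ℝ) (hΩ : Ωbar.PosDef)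
    (Abar : Matrix (Fin k) (Fin m) ℝ) (bbar : Fin k → ℝ)
    (ψ : (Fin k → ℝ) → ℝ) (hψconv : ConvexOn ℝ Set.univ ψ) (hψdiff : Differentiable ℝ ψ)
    (z : Fin m → ℝ)
    (h0 : (Fin m → ℝ) → (Fin k → ℝ) → ℝ)
    (hh0 : h0 = fun b g => (1 / 2) * (b ⬝ᵥ Θbar⁻¹.mulVec b)
      + (1 / 2) * ((g - Abar.mulVec b - bbar) ⬝ᵥ
          Ωbar⁻¹.mulVec (g - Abar.mulVec b - bbar)) + ψ g)
    (h0star : (Fin m → ℝ) → EReal)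
    (hh0star : h0star = fun η => ⨆ b : Fin m → ℝ, ⨆ g : Fin k → ℝ,
        ((b ⬝ᵥ η - h0 b g : ℝ) : EReal))
    (gstar : Fin k → ℝ)
    (hgstar : ∀ g : Fin k → ℝ,
      (1 / 2) * ((gstar - Abar.mulVec z - bbar) ⬝ᵥ
          Ωbar⁻¹.mulVec (gstar - Abar.mulVec z - bbar)) + ψ gstar
      ≤ (1 / 2) * ((g - Abar.mulVec z - bbar) ⬝ᵥ
          Ωbar⁻¹.mulVec (g - Abar.mulVec z - bbar)) + ψ g)
    (ηstar : Fin m → ℝ)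
    (hηstar : ηstar = Θbar⁻¹.mulVec z
      + (Abarᵀ * Ωbar⁻¹).mulVec (Abar.mulVec z + bbar - gstar)) :
    h0star ηstar = ((z ⬝ᵥ ηstar - h0 z gstar : ℝ) : EReal)
    ∧ (∀ η : Fin m → ℝ,
        ((z ⬝ᵥ η : ℝ) : EReal) - h0star η
          ≤ ((z ⬝ᵥ ηstar : ℝ) : EReal) - h0star ηstar)
    ∧ ((z ⬝ᵥ ηstar : ℝ) : EReal) - h0star ηstar = ((h0 z gstar : ℝ) : EReal)
    ∧ h0 z gstar = ⨅ g : Fin k → ℝ, h0 z g := by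
  -- basic facts about the inverse matrices
  have hΘsym : Θbar⁻¹ᵀ = Θbar⁻¹ := by
    have h := (hΘ.inv).1
    rwa [Matrix.IsHermitian, conjTranspose_eq_transpose_of_trivial] at h
  have hΘpsd : ∀ v : Fin m → ℝ, 0 ≤ v ⬝ᵥ Θbar⁻¹ *ᵥ v := by
    intro v
    simpa using (hΘ.inv).posSemidef.dotProduct_mulVec_nonneg v
  have hΩsym : Ωbar⁻¹ᵀ = Ωbar⁻¹ := by
    have h := (hΩ.inv).1
    rwa [Matrix.IsHermitian, conjTranspose_eq_transpose_of_trivial] at h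
  have hΩpsd : ∀ v : Fin k → ℝ, 0 ≤ v ⬝ᵥ Ωbar⁻¹ *ᵥ v := by
    intro v
    simpa using (hΩ.inv).posSemidef.dotProduct_mulVec_nonneg v
  -- the subgradient inequality for ψ at gstar
  have key : ∀ g : Fin k → ℝ,
      0 ≤ (Ωbar⁻¹ *ᵥ (gstar - Abar *ᵥ z - bbar)) ⬝ᵥ (g - gstar) + (ψ g - ψ gstar) := by
    intro g
    set w : Fin k → ℝ := gstar - Abar *ᵥ z - bbar with hw
    set v : Fin k → ℝ := g - gstar with hv
    have hγ : 0 ≤ v ⬝ᵥ Ωbar⁻¹ *ᵥ v := hΩpsd v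
    have step : ∀ t : ℝ, 0 < t → t ≤ 1 →
        0 ≤ (Ωbar⁻¹ *ᵥ w) ⬝ᵥ v + (ψ g - ψ gstar) + t * ((v ⬝ᵥ Ωbar⁻¹ *ᵥ v)/2) := by
      intro t ht0 ht1
      have hg := hgstar (gstar + t • v)
      have hvec : gstar + t • v - Abar *ᵥ z - bbar = w + t • v := by
        rw [hw]; abel
      rw [hvec] at hg
      have hconv : ψ (gstar + t • v) ≤ (1-t) * ψ gstar + t * ψ g := by
        have h12 : gstar + t • v = (1-t) • gstar + t • g := by
          rw [hv]; module
        rw [h12]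
        exact hψconv.2 (Set.mem_univ _) (Set.mem_univ _) (by linarith) ht0.le (by ring)
      have hexp : (w + t • v) ⬝ᵥ Ωbar⁻¹ *ᵥ (w + t • v)
          = w ⬝ᵥ Ωbar⁻¹ *ᵥ w + 2*t*((Ωbar⁻¹ *ᵥ w) ⬝ᵥ v) + t^2*(v ⬝ᵥ Ωbar⁻¹ *ᵥ v) := by
        have hsymm : v ⬝ᵥ Ωbar⁻¹ *ᵥ w = w ⬝ᵥ Ωbar⁻¹ *ᵥ v := symm_dot_aux _ hΩsym v w
        have c1 : (Ωbar⁻¹ *ᵥ w) ⬝ᵥ v = v ⬝ᵥ Ωbar⁻¹ *ᵥ w := dotProduct_comm _ _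
        simp only [Matrix.mulVec_add, Matrix.mulVec_smul, dotProduct_add, add_dotProduct,
          dotProduct_smul, smul_dotProduct, smul_eq_mul]
        rw [c1, hsymm]
        ring
      rw [hexp] at hg
      have hmul : 0 ≤ t * ((Ωbar⁻¹ *ᵥ w) ⬝ᵥ v + (ψ g - ψ gstar) + t * ((v ⬝ᵥ Ωbar⁻¹ *ᵥ v)/2)) := by
        nlinarith [hg, hconv]
      exact nonneg_of_mul_nonneg_right (by linarith [hmul]) ht0
    have hlim : Filter.Tendsto
        (fun n : ℕ => (Ωbar⁻¹ *ᵥ w) ⬝ᵥ v + (ψ g - ψ gstar) + (1/(n+1:ℝ)) * ((v ⬝ᵥ Ωbar⁻¹ *ᵥ v)/2))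
        Filter.atTop (nhds ((Ωbar⁻¹ *ᵥ w) ⬝ᵥ v + (ψ g - ψ gstar))) := by
      have h1 := tendsto_one_div_add_atTop_nhds_zero_nat (𝕜 := ℝ)
      have h2 := Filter.Tendsto.const_add ((Ωbar⁻¹ *ᵥ w) ⬝ᵥ v + (ψ g - ψ gstar))
        (h1.mul_const ((v ⬝ᵥ Ωbar⁻¹ *ᵥ v)/2))
      simpa using h2
    exact ge_of_tendsto' hlim (fun n => step _ (by positivity)
      (by rw [div_le_one (by positivity)]; linarith [Nat.cast_nonneg (α := ℝ) n]))
  -- auxiliary dot-product identity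
  have hAdot : ∀ (b : Fin m → ℝ) (u : Fin k → ℝ),
      b ⬝ᵥ ((Abarᵀ * Ωbar⁻¹) *ᵥ u) = (Ωbar⁻¹ *ᵥ u) ⬝ᵥ (Abar *ᵥ b) := by
    intro b u
    rw [← Matrix.mulVec_mulVec, dotProduct_mulVec, Matrix.vecMul_transpose, dotProduct_comm]
  -- the main inequality: (z, gstar) attains the supremum at ηstar
  have main : ∀ (b : Fin m → ℝ) (g : Fin k → ℝ),
      b ⬝ᵥ ηstar - h0 b g ≤ z ⬝ᵥ ηstar - h0 z gstar := by
    intro b g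
    set w : Fin k → ℝ := gstar - Abar *ᵥ z - bbar with hw
    have hneg : Abar *ᵥ z + bbar - gstar = -w := by rw [hw]; abel
    have e0b : b ⬝ᵥ ηstar = (Θbar⁻¹ *ᵥ z) ⬝ᵥ b - (Ωbar⁻¹ *ᵥ w) ⬝ᵥ (Abar *ᵥ b) := by
      rw [hηstar, dotProduct_add, hAdot, hneg, Matrix.mulVec_neg, neg_dotProduct,
        dotProduct_comm]
      ring
    have e0z : z ⬝ᵥ ηstar = (Θbar⁻¹ *ᵥ z) ⬝ᵥ z - (Ωbar⁻¹ *ᵥ w) ⬝ᵥ (Abar *ᵥ z) := by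
      rw [hηstar, dotProduct_add, hAdot, hneg, Matrix.mulVec_neg, neg_dotProduct,
        dotProduct_comm]
      ring
    have i1 := quad_lower_aux Θbar⁻¹ hΘsym hΘpsd b z
    have i2 := quad_lower_aux Ωbar⁻¹ hΩsym hΩpsd (g - Abar *ᵥ b - bbar) w
    have i3 := key g
    have e2 : (g - Abar *ᵥ b - bbar) - w = (g - gstar) + (Abar *ᵥ z - Abar *ᵥ b) := by
      rw [hw]; abel
    rw [e2, dotProduct_add, dotProduct_sub, dotProduct_sub] at i2
    rw [dotProduct_sub] at i3
    rw [dotProduct_sub] at i1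
    rw [hh0]
    simp only
    rw [e0b, e0z]
    rw [hw] at i2 i3 ⊢
    linarith
  have attain : ∀ η : Fin m → ℝ, ((z ⬝ᵥ η - h0 z gstar : ℝ) : EReal) ≤ h0star η := by
    intro η
    rw [hh0star]
    exact le_iSup₂_of_le z gstar (le_refl _)
  have part1 : h0star ηstar = ((z ⬝ᵥ ηstar - h0 z gstar : ℝ) : EReal) := by
    refine le_antisymm ?_ (attain ηstar)
    rw [hh0star]
    exact iSup₂_le fun b g => EReal.coe_le_coe_iff.2 (main b g)
  have part3 : ((z ⬝ᵥ ηstar : ℝ) : EReal) - h0star ηstar = ((h0 z gstar : ℝ) : EReal) := by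
    rw [part1, ← EReal.coe_sub]
    congr 1
    ring
  refine ⟨part1, fun η => ?_, part3, ?_⟩
  · calc ((z ⬝ᵥ η : ℝ) : EReal) - h0star η
        ≤ ((z ⬝ᵥ η : ℝ) : EReal) - ((z ⬝ᵥ η - h0 z gstar : ℝ) : EReal) :=
          EReal.sub_le_sub (le_refl _) (attain η)
      _ = ((h0 z gstar : ℝ) : EReal) := by rw [← EReal.coe_sub]; congr 1; ring
      _ = ((z ⬝ᵥ ηstar : ℝ) : EReal) - h0star ηstar := part3.symm
  · have hle : ∀ g : Fin k → ℝ, h0 z gstar ≤ h0 z g := by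
      intro g
      rw [hh0]
      simp only
      linarith [hgstar g]
    refine le_antisymm (le_ciInf hle) (ciInf_le ⟨h0 z gstar, ?_⟩ gstar)
    rintro x ⟨g, rfl⟩
    exact hle g
end

section
/- Let p ∈ ℕ, let H be a real p×p symmetric invertible matrix, let E ⊆ {1,…,p}, and write H_E for the p×|E| submatrix of H consisting of the columns indexed by E, and H_{E,E} for the |E|×|E| submatrix of H with rows and columns indexed by E. Let f > 0 be a real number, U an |E|×k real matrix with Uᵀ·H_{E,E}·U invertible, Λ_E an |E|×|E| real matrix, u ∈ ℝ^{|E|}, and let c ∈ ℝ^p be any vector whose subvector of coordinates indexed by E equals Λ_E·u. Set Ω = f·H, A = −H_E, and V = H_E·U, and define Ω̄ = (VᵀΩ⁻¹V)⁻¹, Ā = −Ω̄VᵀΩ⁻¹A, b̄ = −Ω̄VᵀΩ⁻¹c. Then: (i) Ω̄ = f·(UᵀH_{E,E}U)⁻¹; (ii) Ā = (UᵀH_{E,E}U)⁻¹·Uᵀ·H_{E,E}; (iii) b̄ = −(UᵀH_{E,E}U)⁻¹·Uᵀ·Λ_E·u. -/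
open Matrix

/-- Section 6 simplification: with randomization covariance
`Ω = f·H`, `A = −H_E`, `V = H_E·U` and `c` having `E`-block `Λ_E u`, the
quantities `Ω̄`, `Ā`, `b̄` of the asymptotic post-selection likelihood take the
closed forms `Ω̄ = f (Uᵀ H_{E,E} U)⁻¹`, `Ā = (Uᵀ H_{E,E} U)⁻¹ Uᵀ H_{E,E}`,
`b̄ = −(Uᵀ H_{E,E} U)⁻¹ Uᵀ Λ_E u`. -/
theorem randomization_covariance_simplification
    (p k : ℕ) (H : Matrix (Fin p) (Fin p) ℝ)
    (hHsymm : Hᵀ = H) (hH : IsUnit H.det)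
    (E : Finset (Fin p))
    (HE : Matrix (Fin p) ↥E ℝ) (hHE : HE = H.submatrix id (fun j : ↥E => (j : Fin p)))
    (HEE : Matrix ↥E ↥E ℝ)
    (hHEE : HEE = H.submatrix (fun i : ↥E => (i : Fin p)) (fun j : ↥E => (j : Fin p)))
    (f : ℝ) (hf : 0 < f)
    (U : Matrix ↥E (Fin k) ℝ) (hU : IsUnit (Uᵀ * HEE * U).det)
    (ΛE : Matrix ↥E ↥E ℝ) (u : ↥E → ℝ)
    (c : Fin p → ℝ) (hc : ∀ j : ↥E, c (j : Fin p) = ΛE.mulVec u j)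
    (Ω : Matrix (Fin p) (Fin p) ℝ) (hΩ : Ω = f • H)
    (A : Matrix (Fin p) ↥E ℝ) (hA : A = -HE)
    (V : Matrix (Fin p) (Fin k) ℝ) (hV : V = HE * U)
    (Ωbar : Matrix (Fin k) (Fin k) ℝ) (hΩbar : Ωbar = (Vᵀ * Ω⁻¹ * V)⁻¹)
    (Abar : Matrix (Fin k) ↥E ℝ) (hAbar : Abar = -(Ωbar * Vᵀ * Ω⁻¹ * A))
    (bbar : Fin k → ℝ) (hbbar : bbar = -((Ωbar * Vᵀ * Ω⁻¹).mulVec c)) :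
    Ωbar = f • (Uᵀ * HEE * U)⁻¹
    ∧ Abar = (Uᵀ * HEE * U)⁻¹ * Uᵀ * HEE
    ∧ bbar = -(((Uᵀ * HEE * U)⁻¹ * Uᵀ * ΛE).mulVec u) := by
  have hf0 : f ≠ 0 := ne_of_gt hf
  have hsym : ∀ a b, H a b = H b a := fun a b =>
    congrFun (congrFun hHsymm b) a
  -- key pointwise fact: (HEᵀ * H⁻¹) i l = 1 (i) l
  have hP : ∀ (i : ↥E) (l : Fin p),
      (HEᵀ * H⁻¹) i l = (1 : Matrix (Fin p) (Fin p) ℝ) (i : Fin p) l := by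
    intro i l
    have h1 : (HEᵀ * H⁻¹) i l = (H * H⁻¹) (i : Fin p) l := by
      simp only [Matrix.mul_apply, Matrix.transpose_apply, hHE, Matrix.submatrix_apply, id]
      congr 1; ext m; rw [hsym m (i : Fin p)]
    rw [h1, Matrix.mul_nonsing_inv H hH]
  have hPH : (HEᵀ * H⁻¹) * HE = HEE := by
    ext i j
    rw [Matrix.mul_apply]
    simp only [hP]
    have : ∑ l, (1 : Matrix (Fin p) (Fin p) ℝ) (i : Fin p) l * HE l j
        = ((1 : Matrix (Fin p) (Fin p) ℝ) * HE) (i : Fin p) j := by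
      rw [Matrix.mul_apply]
    rw [this, Matrix.one_mul, hHE, hHEE]; rfl
  have hPc : (HEᵀ * H⁻¹).mulVec c = ΛE.mulVec u := by
    ext i
    rw [Matrix.mulVec, dotProduct]
    simp only [hP]
    have : ∑ l, (1 : Matrix (Fin p) (Fin p) ℝ) (i : Fin p) l * c l
        = ((1 : Matrix (Fin p) (Fin p) ℝ)).mulVec c (i : Fin p) := by
      rw [Matrix.mulVec, dotProduct]
    rw [this, Matrix.one_mulVec, hc i]
  have hΩinv : Ω⁻¹ = f⁻¹ • H⁻¹ := by
    rw [hΩ]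
    have : IsUnit f := isUnit_iff_ne_zero.mpr hf0
    lift f to ℝˣ using this
    rw [← Units.smul_def, Matrix.inv_smul' _ _ hH, Units.smul_def]
    norm_cast
  set M : Matrix (Fin k) (Fin k) ℝ := Uᵀ * HEE * U with hM
  have hVΩ : Vᵀ * Ω⁻¹ * V = f⁻¹ • M := by
    rw [hV, hΩinv, Matrix.transpose_mul, Matrix.mul_smul, Matrix.smul_mul, hM]
    congr 1
    rw [← hPH]; simp [Matrix.mul_assoc]
  have hΩb : Ωbar = f • M⁻¹ := by
    rw [hΩbar, hVΩ]
    have : IsUnit f⁻¹ := isUnit_iff_ne_zero.mpr (inv_ne_zero hf0)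
    lift (f⁻¹ : ℝ) to ℝˣ using this with g hg
    rw [← Units.smul_def, Matrix.inv_smul' _ _ hU, Units.smul_def]
    have : ((g⁻¹ : ℝˣ) : ℝ) = f := by
      have : (g : ℝ) * f = 1 := by rw [hg]; field_simp
      rw [Units.val_inv_eq_inv_val]; exact inv_eq_of_mul_eq_one_right this
    rw [this]
  -- the common prefix
  have hW : Ωbar * Vᵀ * Ω⁻¹ = M⁻¹ * Uᵀ * (HEᵀ * H⁻¹) := by
    rw [hΩb, hV, hΩinv, Matrix.transpose_mul]
    rw [Matrix.smul_mul, Matrix.smul_mul, Matrix.mul_smul, smul_smul,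
      mul_inv_cancel₀ hf0, one_smul]
    simp [Matrix.mul_assoc]
  refine ⟨by rw [hΩb, hM], ?_, ?_⟩
  · rw [hAbar, hA, Matrix.mul_neg, neg_neg, hW, Matrix.mul_assoc (M⁻¹ * Uᵀ), hPH]
  · rw [hbbar, hW, ← Matrix.mulVec_mulVec, hPc, Matrix.mulVec_mulVec]
end
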